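/- Let (A,m) be a Noetherian local ring of dimension d ≥ 1 with depth(A) > 0, and let I be a regular ideal of A (an ideal containing a nonzerodivisor). Let M be a finitely generated A-module with ann(M) = 0 such that M_p is a free A_p-module for every prime p ≠ m. Assume G_I(A) is unmixed and equidimensional. If ℓ(I) < d, then r(I^n, M) = Ĩ^n for all n ≥ 1. -/

import Mathlib

open IsLocalRing Filter Polynomial

noncomputable section
set_option synthInstance.maxHeartbeats 1000000
set_option maxHeartbeats 2000000
set_option linter.unusedVariables false

/-- The associated graded ring `G_I(A) = ⊕ₙ Iⁿ/Iⁿ⁺¹` of `A` with respect to `I`,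
realized as the quotient `R(I)/I·R(I)` of the Rees algebra. -/
abbrev assocGraded {A : Type} [CommRing A] (I : Ideal A) :=
  (reesAlgebra I) ⧸ (Ideal.map (algebraMap A (reesAlgebra I)) I)

/-- The fiber cone `R(I)/m·R(I) = ⊕ₙ Iⁿ/m·Iⁿ`. -/
abbrev fiberCone (A : Type) [CommRing A] [IsLocalRing A] (I : Ideal A) :=
  (reesAlgebra I) ⧸ (Ideal.map (algebraMap A (reesAlgebra I)) (maximalIdeal A))

/-- The analytic spread `ℓ(I)`: the Krull dimension of the fiber cone. -/
noncomputable def analyticSpread (A : Type) [CommRing A] [IsLocalRing A] (I : Ideal A) :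
    WithBot ℕ∞ :=
  ringKrullDim (fiberCone A I)

/-- A ring `G` is unmixed and equidimensional (of dimension `d`) if `dim G/P = d`
for every associated prime `P` of `G` (as a module over itself). -/
def UnmixedEquidim (G : Type*) [CommRing G] (d : ℕ) : Prop :=
  ∀ P ∈ associatedPrimes G G, ringKrullDim (G ⧸ P) = (d : WithBot ℕ∞)

/-- `A` is analytically unramified: its `m`-adic completion is reduced. -/
def AnalyticallyUnramified (A : Type) [CommRing A] [IsLocalRing A] : Prop :=
  IsReduced (AdicCompletion (maximalIdeal A) A)

/-- `depth A > 0`: the maximal ideal contains a nonzerodivisor. -/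
def PosDepth (A : Type) [CommRing A] [IsLocalRing A] : Prop :=
  ∃ x ∈ maximalIdeal A, x ∈ nonZeroDivisors A

/-- `M` is free on the punctured spectrum: `M_p` is a free `A_p`-module for every
prime `p ≠ m`. -/
def FreeOnPunctured (A : Type) [CommRing A] [IsLocalRing A]
    (M : Type) [AddCommGroup M] [Module A M] : Prop :=
  ∀ (P : Ideal A) (hP : P.IsPrime), P ≠ maximalIdeal A →
    Module.Free (Localization.AtPrime P) (LocalizedModule P.primeCompl M)

/-- `M` has rank one: `M_p ≅ A_p` for every minimal prime `p` of `A`. -/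
def RankOne (A : Type) [CommRing A] (M : Type) [AddCommGroup M] [Module A M] : Prop :=
  ∀ (P : Ideal A) (hP : P.IsPrime), P ∈ minimalPrimes A →
    Nonempty ((LocalizedModule P.primeCompl M) ≃ₗ[Localization.AtPrime P] Localization.AtPrime P)

/-- `r(I,M)`: the stable value of the ascending chain of ideals `(I^(n+1)M : I^n M)`. -/
noncomputable def rIM {A : Type} [CommRing A] (I : Ideal A) (M : Type)
    [AddCommGroup M] [Module A M] : Ideal A :=
  ⨆ n : ℕ, Submodule.colon (I ^ (n + 1) • (⊤ : Submodule A M)) ((I ^ n • (⊤ : Submodule A M) : Submodule A M) : Set M)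

/-- The Ratliff–Rush closure `J̃` of an ideal `J`: the stable value of the ascending chain
`(J^(n+1) : J^n)`. -/
noncomputable def Ideal.ratliffRush {A : Type} [CommRing A] (J : Ideal A) : Ideal A :=
  ⨆ n : ℕ, Submodule.colon (J ^ (n + 1) : Ideal A) (J ^ n : Ideal A)

/-!
Let `a ∈ r(J, M)` with `J = Iⁿ`, so `a Jᵏ M ⊆ Jᵏ⁺¹ M` for some `k`, and let `x ∈ Jᵏ`. Since `M` is
faithful and free on the punctured spectrum, `M_p` is a nonzero free `A_p`-module for every prime
`p ≠ m`, and reading off a coordinate shows `ax ∈ Jᵏ⁺¹ A_p`. Hence `(Jᵏ⁺¹ : ax)` is `m`-primary.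
On the other hand, if `u ∈ Iʲ \ Iʲ⁺¹` were killed by a power of `m` modulo `Iʲ⁺¹`, its class in
`G_I(A)` would lie in an associated prime `P ⊇ m G_I(A)`; then `G_I(A)/P` is a quotient of the fiber
cone, so `d = dim G_I(A)/P ≤ ℓ(I) < d`. Climbing from `ax ∈ I^{nk}` one power at a time gives
`ax ∈ I^{nk+n} = Jᵏ⁺¹`, i.e. `a ∈ (Jᵏ⁺¹ : Jᵏ) ⊆ J̃`.
-/

section Colon

variable {A M : Type} [CommRing A] [AddCommGroup M] [Module A M]

lemma Submodule.colon_le_colon_smul (J : Ideal A) (N P : Submodule A M) :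
    N.colon (P : Set M) ≤ (J • N).colon ((J • P : Submodule A M) : Set M) := by
  intro a ha
  rw [Submodule.mem_colon] at ha ⊢
  intro z hz
  refine Submodule.smul_induction_on hz (fun r hr w hw => ?_) (fun z₁ z₂ h₁ h₂ => ?_)
  · rw [smul_comm]
    exact Submodule.smul_mem_smul hr (ha w hw)
  · rw [smul_add]
    exact add_mem h₁ h₂

lemma Ideal.colon_le_colon_smul_top (I J : Ideal A) :
    I.colon (J : Set A) ≤ (I • ⊤ : Submodule A M).colon ((J • ⊤ : Submodule A M) : Set M) := by
  intro a ha
  rw [Submodule.mem_colon] at ha ⊢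
  intro z hz
  refine Submodule.smul_induction_on hz (fun r hr w _ => ?_) (fun z₁ z₂ h₁ h₂ => ?_)
  · rw [smul_smul]
    exact Submodule.smul_mem_smul (ha r hr) trivial
  · rw [smul_add]
    exact add_mem h₁ h₂

lemma Ideal.span_singleton_mul_smul_top_le {N J : Ideal A} {a x : A}
    (ha : a ∈ (N • ⊤ : Submodule A M).colon ((J • ⊤ : Submodule A M) : Set M)) (hx : x ∈ J) :
    Ideal.span {a * x} • (⊤ : Submodule A M) ≤ N • ⊤ := by
  refine Submodule.smul_le.mpr fun r hr z _ => ?_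
  obtain ⟨y, rfl⟩ := Ideal.mem_span_singleton'.mp hr
  rw [show y * (a * x) = a * (x * y) by ring, mul_smul]
  exact Submodule.mem_colon.mp ha _ (Submodule.smul_mem_smul (Ideal.mul_mem_right y J hx) trivial)

lemma monotone_colon_pow_smul_top (J : Ideal A) :
    Monotone fun k : ℕ =>
      (J ^ (k + 1) • ⊤ : Submodule A M).colon ((J ^ k • ⊤ : Submodule A M) : Set M) := by
  refine monotone_nat_of_le_succ fun k => ?_
  simpa only [pow_succ' J, mul_smul] using
    Submodule.colon_le_colon_smul J (J ^ (k + 1) • ⊤ : Submodule A M) (J ^ k • ⊤)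

lemma mem_rIM_iff {J : Ideal A} {a : A} :
    a ∈ rIM J M ↔
      ∃ k, a ∈ (J ^ (k + 1) • ⊤ : Submodule A M).colon ((J ^ k • ⊤ : Submodule A M) : Set M) :=
  Submodule.mem_iSup_of_directed _ (monotone_colon_pow_smul_top J).directed_le

lemma Ideal.ratliffRush_le_rIM (J : Ideal A) : J.ratliffRush ≤ rIM J M :=
  iSup_mono fun _ => Ideal.colon_le_colon_smul_top _ _

end Colon

section Localization

variable {A M : Type} [CommRing A] [AddCommGroup M] [Module A M]

lemma Ideal.le_of_smul_top_le_smul_top {R F : Type*} [CommRing R] [AddCommGroup F] [Module R F]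
    [Module.Free R F] [Nontrivial F] {I N : Ideal R}
    (h : I • (⊤ : Submodule R F) ≤ N • ⊤) : I ≤ N := by
  let b := Module.Free.chooseBasis R F
  obtain ⟨i⟩ := b.index_nonempty
  intro c hc
  have hcb : c • b i ∈ (N • ⊤ : Submodule R F) := h (Submodule.smul_mem_smul hc trivial)
  have hcoord : b.coord i (c • b i) ∈ N • (⊤ : Submodule R R) := by
    have := Submodule.mem_map_of_mem (f := b.coord i) hcb
    rw [Submodule.map_smul''] at this
    exact Submodule.smul_mono le_rfl le_top this
  simpa [Module.Basis.coord_apply, Module.Basis.repr_self] using hcoord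

lemma nontrivial_localizedModule_of_annihilator_eq_bot [Module.Finite A M]
    (hann : Module.annihilator A M = ⊥) (p : Ideal A) [p.IsPrime] :
    Nontrivial (LocalizedModule p.primeCompl M) :=
  Module.mem_support_iff.mp <|
    (Module.mem_support_iff_of_finite (p := ⟨p, inferInstance⟩)).mpr (hann ▸ bot_le)

lemma Ideal.map_le_map_of_smul_top_le (p : Ideal A) [p.IsPrime]
    [Module.Free (Localization.AtPrime p) (LocalizedModule p.primeCompl M)]
    [Nontrivial (LocalizedModule p.primeCompl M)] {I N : Ideal A}
    (h : I • (⊤ : Submodule A M) ≤ N • ⊤) :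
    I.map (algebraMap A (Localization.AtPrime p)) ≤ N.map (algebraMap A (Localization.AtPrime p)) := by
  apply Ideal.le_of_smul_top_le_smul_top (F := LocalizedModule p.primeCompl M)
  have := (Submodule.localized'gi (Localization.AtPrime p) p.primeCompl
    (LocalizedModule.mkLinearMap p.primeCompl M)).gc.monotone_l h
  simpa only [Submodule.localized'_smul, Ideal.localized'_eq_map, Submodule.localized'_top] using this

end Localization

section MaximalIdealPrimary

variable {A : Type} [CommRing A] [IsLocalRing A] [IsNoetherianRing A]

lemma exists_maximalIdeal_pow_le_of_forall_not_le (L : Ideal A)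
    (h : ∀ p : Ideal A, p.IsPrime → p ≠ maximalIdeal A → ¬ L ≤ p) :
    ∃ t, maximalIdeal A ^ t ≤ L := by
  refine Ideal.exists_pow_le_of_le_radical_of_fg ?_ (IsNoetherian.noetherian _)
  rw [Ideal.radical_eq_sInf]
  refine le_sInf fun q ⟨hLq, hq⟩ => ?_
  by_contra hne
  exact h q hq (Ne.symm (ne_of_not_le hne)) hLq

lemma exists_maximalIdeal_pow_le_colon {M : Type} [AddCommGroup M] [Module A M] [Module.Finite A M]
    (hann : Module.annihilator A M = ⊥) (hfree : FreeOnPunctured A M) {N : Ideal A} {c : A}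
    (h : Ideal.span {c} • (⊤ : Submodule A M) ≤ N • ⊤) :
    ∃ t, maximalIdeal A ^ t ≤ N.colon {c} := by
  refine exists_maximalIdeal_pow_le_of_forall_not_le _ fun p hp hne hle => ?_
  have := hfree p hp hne
  have := nontrivial_localizedModule_of_annihilator_eq_bot hann p
  have hc := Ideal.map_le_map_of_smul_top_le p h
    (Ideal.mem_map_of_mem _ (Ideal.mem_span_singleton_self c))
  obtain ⟨s, hs, hsc⟩ :=
    (IsLocalization.algebraMap_mem_map_algebraMap_iff p.primeCompl _ N c).mp hc
  exact hs (hle (Submodule.mem_colon_singleton.mpr hsc))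

end MaximalIdealPrimary

section AssocGraded

variable {A : Type} [CommRing A]

/-- The class of `u ∈ Iᵏ` in the degree `k` component `Iᵏ/Iᵏ⁺¹` of `G_I(A)`. -/
def assocGradedMk (I : Ideal A) (k : ℕ) (u : A) (hu : u ∈ I ^ k) : assocGraded I :=
  Ideal.Quotient.mk _ ⟨monomial k u, reesAlgebra.monomial_mem.mpr hu⟩

lemma coeff_mem_pow_succ_of_mem_map {I : Ideal A} {r : reesAlgebra I}
    (hr : r ∈ I.map (algebraMap A (reesAlgebra I))) (i : ℕ) :
    (r : A[X]).coeff i ∈ I ^ (i + 1) := by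
  induction hr using Submodule.span_induction generalizing i with
  | mem x hx =>
    obtain ⟨c, hc, rfl⟩ := hx
    change (C c).coeff i ∈ I ^ (i + 1)
    rw [coeff_C]
    split_ifs with hi
    · subst hi
      simpa using hc
    · exact zero_mem _
  | zero => simp
  | add x y _ _ hx hy =>
    rw [AddMemClass.coe_add, coeff_add]
    exact add_mem (hx i) (hy i)
  | smul a x _ hx =>
    rw [smul_eq_mul, MulMemClass.coe_mul, coeff_mul]
    refine sum_mem fun ⟨j, l⟩ hjl => ?_
    rw [Finset.HasAntidiagonal.mem_antidiagonal] at hjl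
    have hle : I ^ j * I ^ (l + 1) ≤ I ^ (i + 1) := by
      rw [← pow_add]
      exact Ideal.pow_le_pow_right (by omega)
    exact hle (Ideal.mul_mem_mul (a.2 j) (hx l))

lemma exists_mem_map_coe_eq_monomial {I : Ideal A} {k : ℕ} {v : A} (hv : v ∈ I ^ (k + 1)) :
    ∃ r ∈ I.map (algebraMap A (reesAlgebra I)), (r : A[X]) = monomial k v := by
  rw [pow_succ] at hv
  refine Submodule.mul_induction_on hv (fun x hx y hy => ?_) fun x y hx hy => ?_
  · refine ⟨algebraMap A (reesAlgebra I) y * ⟨monomial k x, reesAlgebra.monomial_mem.mpr hx⟩,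
      Ideal.mul_mem_right _ _ (Ideal.mem_map_of_mem _ hy), ?_⟩
    change C y * monomial k x = _
    rw [C_mul_monomial, mul_comm]
  · obtain ⟨r₁, hr₁, h₁⟩ := hx
    obtain ⟨r₂, hr₂, h₂⟩ := hy
    exact ⟨r₁ + r₂, add_mem hr₁ hr₂, by rw [AddMemClass.coe_add, h₁, h₂, map_add]⟩

lemma assocGradedMk_eq_zero_iff {I : Ideal A} {k : ℕ} {u : A} (hu : u ∈ I ^ k) :
    assocGradedMk I k u hu = 0 ↔ u ∈ I ^ (k + 1) := by
  rw [assocGradedMk, Ideal.Quotient.eq_zero_iff_mem]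
  constructor
  · intro h
    simpa using coeff_mem_pow_succ_of_mem_map h k
  · intro h
    obtain ⟨r, hr, hrk⟩ := exists_mem_map_coe_eq_monomial h
    rwa [show r = ⟨monomial k u, reesAlgebra.monomial_mem.mpr hu⟩ from Subtype.ext hrk] at hr

lemma algebraMap_mul_assocGradedMk (I : Ideal A) (k : ℕ) (w : A) {u : A} (hu : u ∈ I ^ k) :
    algebraMap A (assocGraded I) w * assocGradedMk I k u hu =
      assocGradedMk I k (w * u) (Ideal.mul_mem_left _ w hu) := by
  rw [assocGradedMk, assocGradedMk, IsScalarTower.algebraMap_apply A (reesAlgebra I),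
    Ideal.Quotient.algebraMap_eq, ← map_mul]
  congr 1
  exact Subtype.ext C_mul_monomial

end AssocGraded

section Saturation

variable {A : Type} [CommRing A] [IsLocalRing A]

lemma ringKrullDim_le_analyticSpread_of_surjective (I : Ideal A) {S : Type*} [CommRing S]
    (φ : reesAlgebra I →+* S) (hφ : Function.Surjective φ)
    (hm : ∀ w ∈ maximalIdeal A, φ (algebraMap A (reesAlgebra I) w) = 0) :
    ringKrullDim S ≤ analyticSpread A I := by
  have hker : (maximalIdeal A).map (algebraMap A (reesAlgebra I)) ≤ RingHom.ker φ :=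
    Ideal.map_le_iff_le_comap.mpr hm
  exact ringKrullDim_le_of_surjective _
    (Ideal.Quotient.lift_surjective_of_surjective _ (fun _ h => hker h) hφ)

variable [IsNoetherianRing A] {I : Ideal A} {d : ℕ}

lemma mem_pow_succ_of_maximalIdeal_pow_le_colon (hunmix : UnmixedEquidim (assocGraded I) d)
    (hl : analyticSpread A I < d) {k t : ℕ} {u : A} (hu : u ∈ I ^ k)
    (ht : maximalIdeal A ^ t ≤ (I ^ (k + 1)).colon {u}) : u ∈ I ^ (k + 1) := by
  by_contra hu'
  have hg : assocGradedMk I k u hu ≠ 0 := (assocGradedMk_eq_zero_iff hu).not.mpr hu'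
  obtain ⟨P, hP, hannP⟩ := exists_le_isAssociatedPrime_of_isNoetherianRing (assocGraded I) _ hg
  have := hP.isPrime
  have hmtP : maximalIdeal A ^ t ≤ P.comap (algebraMap A (assocGraded I)) := fun w hw => hannP <| by
    rw [Submodule.mem_colon_singleton, smul_eq_mul, algebraMap_mul_assocGradedMk,
      Submodule.mem_bot, assocGradedMk_eq_zero_iff]
    exact Submodule.mem_colon_singleton.mp (ht hw)
  have hmP : (maximalIdeal A).map (algebraMap A (assocGraded I)) ≤ P :=
    Ideal.map_le_iff_le_comap.mpr (Ideal.IsPrime.le_of_pow_le hmtP)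
  -- without this, instance search finds no `CommRing` structure on `assocGraded I ⧸ P`
  let _ : CommRing (reesAlgebra I) := Subalgebra.toCommRing _
  let φ : reesAlgebra I →+* assocGraded I ⧸ P := (Ideal.Quotient.mk P).comp (Ideal.Quotient.mk _)
  have hle := ringKrullDim_le_analyticSpread_of_surjective (S := assocGraded I ⧸ P) I φ
    (Ideal.Quotient.mk_surjective.comp Ideal.Quotient.mk_surjective) fun w hw => by
      rw [RingHom.comp_apply, Ideal.Quotient.eq_zero_iff_mem]
      exact hmP (Ideal.mem_map_of_mem _ hw)
  rw [hunmix P hP] at hle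
  exact (hle.trans_lt hl).false

lemma mem_pow_add_of_maximalIdeal_pow_le_colon (hunmix : UnmixedEquidim (assocGraded I) d)
    (hl : analyticSpread A I < d) {k t : ℕ} {u : A} (hu : u ∈ I ^ k) :
    ∀ {j : ℕ}, maximalIdeal A ^ t ≤ (I ^ (k + j)).colon {u} → u ∈ I ^ (k + j)
  | 0, _ => hu
  | j + 1, ht => by
    have hcolon : (I ^ (k + j + 1)).colon {u} ≤ (I ^ (k + j)).colon {u} :=
      Submodule.colon_mono (Ideal.pow_le_pow_right (Nat.le_succ _)) le_rfl
    exact mem_pow_succ_of_maximalIdeal_pow_le_colon hunmix hl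
      (mem_pow_add_of_maximalIdeal_pow_le_colon hunmix hl hu (ht.trans hcolon)) ht

end Saturation

theorem stmt6_general (A : Type) [CommRing A] [IsLocalRing A] [IsNoetherianRing A]
    (d : ℕ)
    (I : Ideal A)
    (M : Type) [AddCommGroup M] [Module A M] [Module.Finite A M]
    (hann : Module.annihilator A M = ⊥)
    (hfree : FreeOnPunctured A M)
    (hunmix : UnmixedEquidim (assocGraded I) d)
    (hl : analyticSpread A I < (d : WithBot ℕ∞)) :
    ∀ n : ℕ, 1 ≤ n → rIM (I ^ n) M = (I ^ n).ratliffRush := by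
  intro n _
  refine le_antisymm (fun a ha => ?_) (Ideal.ratliffRush_le_rIM _)
  obtain ⟨k, hak⟩ := mem_rIM_iff.mp ha
  refine Ideal.mem_iSup_of_mem k (Submodule.mem_colon.mpr fun x hx => ?_)
  obtain ⟨t, ht⟩ := exists_maximalIdeal_pow_le_colon hann hfree
    (Ideal.span_singleton_mul_smul_top_le hak hx)
  rw [← pow_mul] at hx
  rw [← pow_mul, mul_add_one] at ht
  rw [smul_eq_mul, ← pow_mul, mul_add_one]
  exact mem_pow_add_of_maximalIdeal_pow_le_colon hunmix hl (Ideal.mul_mem_left _ a hx) ht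

/-- If `G_I(A)` is unmixed and equidimensional and `ℓ(I) < d`, then `r(Iⁿ,M) = Ĩⁿ`
for all `n ≥ 1`. -/
theorem stmt6 (A : Type) [CommRing A] [IsLocalRing A] [IsNoetherianRing A]
    (d : ℕ) (hd : 1 ≤ d) (hdim : ringKrullDim A = (d : WithBot ℕ∞))
    (hdepth : PosDepth A)
    (I : Ideal A) (hreg : ∃ x ∈ I, x ∈ nonZeroDivisors A)
    (M : Type) [AddCommGroup M] [Module A M] [Module.Finite A M]
    (hann : Module.annihilator A M = ⊥)
    (hfree : FreeOnPunctured A M)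
    (hunmix : UnmixedEquidim (assocGraded I) d)
    (hl : analyticSpread A I < (d : WithBot ℕ∞)) :
    ∀ n : ℕ, 1 ≤ n → rIM (I ^ n) M = (I ^ n).ratliffRush :=
  stmt6_general A d I M hann hfree hunmix hl

end
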